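/- (Proposition 4.) The Möbius function of the lattice ℰ^n of embedded subsets of an n-set between the bottom element (∅,P_⊥) and the top element (N,P^⊤) equals the Möbius function of the lattice of partitions of an (n+1)-set between its bottom and top: μ_{ℰ^n}((∅,P_⊥),(N,P^⊤)) = μ_{𝒫^{n+1}} = (−1)^n · n!. -/

import Mathlib

open scoped BigOperators

/-- `modp n A` is the modular partition `P^A_⊥` of `Fin n` whose unique (possibly)
non-singleton block is `A`, all other blocks being singletons. -/
def modp (n : ℕ) (A : Set (Fin n)) : Setoid (Fin n) where
  r x y := x = y ∨ (x ∈ A ∧ y ∈ A)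
  iseqv := by
    refine ⟨fun _ => Or.inl rfl, ?_, ?_⟩
    · rintro x y (rfl | ⟨hx, hy⟩)
      · exact Or.inl rfl
      · exact Or.inr ⟨hy, hx⟩
    · rintro x y z (rfl | ⟨hx, hy⟩) h
      · exact h
      · rcases h with rfl | ⟨hy', hz⟩
        · exact Or.inr ⟨hx, hy⟩
        · exact Or.inr ⟨hx, hz⟩

/-- The product `X^N = 2^N × 𝒫^N` of the subset lattice and the partition lattice,
ordered componentwise. -/
abbrev XN (n : ℕ) := Set (Fin n) × Setoid (Fin n)

/-- The closure operator `cl` on `X^N`:  `cl(∅,P) = (∅,P)` and, for `A ≠ ∅`,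
`cl(A,P) = (Ā, P ⊔ P^A_⊥)` where `Ā` is the block of `P ⊔ P^A_⊥` containing `A`. -/
def EmbClosure (n : ℕ) (x : XN n) : XN n :=
  ({y | ∃ a ∈ x.1, (x.2 ⊔ modp n x.1) y a}, x.2 ⊔ modp n x.1)

/-- An embedded subset is a pair that coincides with its closure. -/
def IsEmbedded (n : ℕ) (x : XN n) : Prop := EmbClosure n x = x

/-- The lattice `ℰ^N` of embedded subsets, with the induced order. -/
abbrev Emb (n : ℕ) := {x : XN n // IsEmbedded n x}

lemma modp_le_of_subsingleton {n : ℕ} {A : Set (Fin n)} (h : A.Subsingleton)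
    (Q : Setoid (Fin n)) : modp n A ≤ Q := by
  rw [Setoid.le_def]
  intro x y hxy
  rcases hxy with rfl | ⟨hx, hy⟩
  · exact Q.refl' x
  · obtain rfl := h hx hy
    exact Q.refl' x

lemma modp_eq_bot_of_subsingleton {n : ℕ} {A : Set (Fin n)} (h : A.Subsingleton) :
    modp n A = ⊥ :=
  le_antisymm (modp_le_of_subsingleton h ⊥) bot_le

lemma embedded_empty (n : ℕ) (Q : Setoid (Fin n)) : IsEmbedded n (∅, Q) := by
  unfold IsEmbedded EmbClosure
  refine Prod.ext ?_ ?_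
  · simp
  · simpa using sup_eq_left.mpr (modp_le_of_subsingleton Set.subsingleton_empty Q)

lemma embedded_univ_top (n : ℕ) : IsEmbedded n (Set.univ, ⊤) := by
  unfold IsEmbedded EmbClosure
  refine Prod.ext ?_ ?_
  · ext y
    simp only [Set.mem_setOf_eq, Set.mem_univ, iff_true]
    exact ⟨y, trivial, Setoid.refl' _ y⟩
  · exact sup_eq_left.mpr le_top

lemma embedded_singleton (n : ℕ) (i : Fin n) : IsEmbedded n ({i}, ⊥) := by
  have hb : modp n ({i} : Set (Fin n)) = ⊥ :=
    modp_eq_bot_of_subsingleton Set.subsingleton_singleton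
  unfold IsEmbedded EmbClosure
  refine Prod.ext ?_ ?_
  · ext y
    simp only [Set.mem_setOf_eq, hb, sup_idem, Set.mem_singleton_iff]
    constructor
    · rintro ⟨a, ha, hrel⟩
      subst ha
      have h' : ((⊥ : Setoid (Fin n)) ⊔ modp n ({a} : Set (Fin n))) y a := hrel
      rw [hb, sup_idem] at h'
      simpa [Setoid.bot_def] using h'
    · rintro rfl
      exact ⟨y, rfl, Setoid.refl' _ y⟩
  · simp [hb]

/-- The bottom element `(∅, P_⊥)` of `ℰ^N`. -/
def botE (n : ℕ) : Emb n := ⟨(∅, ⊥), embedded_empty n ⊥⟩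

/-- The top element `(N, P^⊤)` of `ℰ^N`. -/
def topE (n : ℕ) : Emb n := ⟨(Set.univ, ⊤), embedded_univ_top n⟩

/-- The atom `({i}, P_⊥)` of `ℰ^N`. -/
def atomS (n : ℕ) (i : Fin n) : Emb n := ⟨({i}, ⊥), embedded_singleton n i⟩

/-- The atom `(∅, [ij])` of `ℰ^N`, where `[ij]` is the atom of the partition lattice
whose unique non-singleton block is the pair `{i, j}`. -/
def atomP (n : ℕ) (i j : Fin n) : Emb n := ⟨(∅, modp n {i, j}), embedded_empty n _⟩

/-- A pair is an atom candidate: of the form `({i},P_⊥)` or `(∅,[ij])` with `i ≠ j`. -/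
def IsAtomPair (n : ℕ) (a : XN n) : Prop :=
  (∃ i : Fin n, a = ({i}, ⊥)) ∨ ∃ i j : Fin n, i ≠ j ∧ a = (∅, modp n {i, j})

/-- The number of blocks `|P|` of a partition. -/
noncomputable def numBlocks {α : Type*} (P : Setoid α) : ℕ := P.classes.ncard

/-- The rank function `r(A,P) = (n − |P|) + min{|A|,1}` of `ℰ^N`. -/
noncomputable def erank (n : ℕ) (x : XN n) : ℕ := (n - numBlocks x.2) + min x.1.ncard 1

/-- The partition `Q^S` of `S` induced by a partition `Q` of `N`. -/
def indPart {n : ℕ} (S : Set (Fin n)) (Q : Setoid (Fin n)) : Setoid S :=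
  Setoid.comap Subtype.val Q

/-- `mu` is the Möbius function of the (finite) poset `α`. -/
def IsMobius {α : Type*} [PartialOrder α] (mu : α → α → ℤ) : Prop :=
  (∀ x, mu x x = 1) ∧
  (∀ x y, ¬x ≤ y → mu x y = 0) ∧
  (∀ x y, x < y → mu x y = -∑ᶠ z ∈ Set.Ico x y, mu x z)

/-!
Sending a partition `Q` of `Fin (n + 1)` to the pair formed by the points of `Fin n` in the block
of the extra point `Fin.last n` and the partition that `Q` induces on `Fin n` is an order
isomorphism `𝒫^{n+1} ≃o ℰ^n` matching bottoms and tops, so the two Möbius values agree.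

For the partition lattice, apply Weisner's theorem `∑_{x ⊓ a = ⊥} μ(x, ⊤) = 0` in `𝒫^{m+1}` to
the coatom `a` whose blocks are `{last}` and its complement. The partitions `x` with `x ⊓ a = ⊥`
are `⊥` and the `m` atoms `{i, last}`, whose upper intervals are partition lattices of `m`-sets;
hence `μ_{m+1}(⊥, ⊤) = -m · μ_m(⊥, ⊤)`.
-/

namespace IsMobius

variable {α β : Type*} [PartialOrder α] [PartialOrder β] {mu : α → α → ℤ}

theorem unique [Finite α] {nu : α → α → ℤ} (hmu : IsMobius mu) (hnu : IsMobius nu) :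
    mu = nu := by
  funext x y
  induction y using (Finite.to_wellFoundedLT (α := α)).wf.induction with
  | _ y ih =>
    obtain rfl | hxy := eq_or_ne x y
    · rw [hmu.1, hnu.1]
    by_cases hle : x ≤ y
    · have hlt := lt_of_le_of_ne hle hxy
      rw [hmu.2.2 x y hlt, hnu.2.2 x y hlt]
      exact congrArg Neg.neg (finsum_mem_congr rfl fun z hz => ih z hz.2)
    · rw [hmu.2.1 x y hle, hnu.2.1 x y hle]

theorem comp_orderIso (e : α ≃o β) {nu : β → β → ℤ} (h : IsMobius nu) :
    IsMobius fun x y => nu (e x) (e y) := by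
  refine ⟨fun x => h.1 _, fun x y hxy => h.2.1 _ _ (by simpa using hxy), fun x y hxy => ?_⟩
  dsimp only
  rw [h.2.2 _ _ (by simpa using hxy), ← e.image_Ico, finsum_mem_image e.injective.injOn]

theorem eq_comp_orderIso [Finite α] (e : α ≃o β) {nu : β → β → ℤ}
    (hmu : IsMobius mu) (hnu : IsMobius nu) (x y : α) : mu x y = nu (e x) (e y) :=
  congrFun (congrFun (hmu.unique (hnu.comp_orderIso e)) x) y

theorem restrict {s : Set α} [s.OrdConnected] (h : IsMobius mu) :
    IsMobius fun x y : s => mu x y := by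
  refine ⟨fun x => h.1 _, fun x y hxy => h.2.1 _ _ hxy, fun x y hxy => ?_⟩
  have himage : Subtype.val '' Set.Ico x y = Set.Ico x.1 y.1 := by
    rw [← Set.preimage_subtype_val_Ico, Subtype.image_preimage_coe,
      Set.inter_eq_right.mpr (Set.Ico_subset_Icc_self.trans (Set.OrdConnected.out ‹_› x.2 y.2))]
  dsimp only
  rw [h.2.2 _ _ hxy, ← himage, finsum_mem_image Subtype.val_injective.injOn]

theorem incidenceAlgebra_mu [Fintype α] [DecidableEq α] [LocallyFiniteOrder α] :
    IsMobius fun x y : α => IncidenceAlgebra.mu ℤ x y := by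
  refine ⟨IncidenceAlgebra.mu_self, fun x y hxy => IncidenceAlgebra.apply_eq_zero_of_not_le hxy _,
    fun x y hxy => ?_⟩
  dsimp only
  rw [IncidenceAlgebra.mu_eq_neg_sum_Ico_of_ne hxy.ne, ← Finset.coe_Ico, finsum_mem_coe_finset]

end IsMobius

theorem exists_isMobius (α : Type*) [PartialOrder α] [Finite α] :
    ∃ mu : α → α → ℤ, IsMobius mu := by
  classical
  let _ : Fintype α := Fintype.ofFinite α
  let _ : LocallyFiniteOrder α := Fintype.toLocallyFiniteOrder
  exact ⟨_, IsMobius.incidenceAlgebra_mu⟩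

open Finset IncidenceAlgebra in
theorem IncidenceAlgebra.sum_mu_top_of_inf_eq_bot {𝕜 L : Type*} [Ring 𝕜] [Lattice L]
    [BoundedOrder L] [Fintype L] [DecidableEq L] [LocallyFiniteOrder L] {a : L} (ha : a ≠ ⊤) :
    ∑ x with x ⊓ a = ⊥, mu 𝕜 x ⊤ = 0 := by
  classical
  -- `[x ⊓ a = ⊥] = ∑_{z ≤ x ⊓ a} μ(⊥, z)`; exchanging sums leaves `∑_{x ≥ z} μ(x, ⊤) = [z = ⊤]`.
  calc ∑ x with x ⊓ a = ⊥, mu 𝕜 x ⊤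
      = ∑ x, (∑ z ∈ Icc ⊥ (x ⊓ a), mu 𝕜 ⊥ z) * mu 𝕜 x ⊤ := by
        rw [sum_filter]
        refine sum_congr rfl fun x _ => ?_
        rw [sum_Icc_mu_right]
        by_cases hx : x ⊓ a = ⊥
        · simp [hx]
        · simp [hx, Ne.symm hx]
    _ = ∑ x, ∑ z, if z ≤ x ∧ z ≤ a then mu 𝕜 ⊥ z * mu 𝕜 x ⊤ else 0 := by
        refine sum_congr rfl fun x _ => ?_
        rw [sum_mul, ← sum_filter]
        congr 1
        ext z
        simp
    _ = ∑ z with z ≤ a, mu 𝕜 ⊥ z * ∑ x ∈ Icc z ⊤, mu 𝕜 x ⊤ := by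
        rw [sum_comm, sum_filter]
        refine sum_congr rfl fun z _ => ?_
        rw [mul_sum, ← sum_filter]
        split_ifs with hz
        · congr 1
          ext x
          simp [hz]
        · simp [hz]
    _ = 0 := by
        refine sum_eq_zero fun z hz => ?_
        have hz : z ≠ ⊤ := fun h => ha (top_le_iff.mp (h ▸ (mem_filter.mp hz).2))
        rw [sum_Icc_mu_left, if_neg hz, mul_zero]

theorem IsMobius.sum_apply_top_of_inf_eq_bot {L : Type*} [Lattice L] [BoundedOrder L] [Finite L]
    {mu : L → L → ℤ} (h : IsMobius mu) {a : L} (ha : a ≠ ⊤) :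
    ∑ᶠ x ∈ {x : L | x ⊓ a = ⊥}, mu x ⊤ = 0 := by
  classical
  let _ : Fintype L := Fintype.ofFinite L
  let _ : LocallyFiniteOrder L := Fintype.toLocallyFiniteOrder
  rw [h.unique IsMobius.incidenceAlgebra_mu, ← Finset.coe_filter_univ, finsum_mem_coe_finset]
  exact IncidenceAlgebra.sum_mu_top_of_inf_eq_bot ha

namespace Setoid

variable {α β : Type*}

instance instFinite [Finite α] : Finite (Setoid α) :=
  Finite.of_injective (fun r : Setoid α => ⇑r) fun _ _ => eq_iff_rel_eq.mpr

def orderIsoOfEquiv (e : α ≃ β) : Setoid α ≃o Setoid β where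
  toFun r := r.comap e.symm
  invFun r := r.comap e
  left_inv r := by ext; simp only [comap_rel, Equiv.symm_apply_apply]
  right_inv r := by ext; simp only [comap_rel, Equiv.apply_symm_apply]
  map_rel_iff' {r s} := ⟨fun h x y hxy => by
    have : s (e.symm (e x)) (e.symm (e y)) :=
      h (show r (e.symm (e x)) (e.symm (e y)) by rwa [e.symm_apply_apply, e.symm_apply_apply])
    rwa [e.symm_apply_apply, e.symm_apply_apply] at this,
    fun h _ _ hxy => h hxy⟩

noncomputable def iciKerOrderIso {f : α → β} (hf : Function.Surjective f) :
    Set.Ici (ker f) ≃o Setoid β :=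
  (correspondence (ker f)).trans (orderIsoOfEquiv (quotientKerEquivOfSurjective f hf))

end Setoid

theorem IsMobius.apply_ker_top {α β : Type*} [Finite α] {f : α → β}
    (hf : Function.Surjective f) {mu : Setoid α → Setoid α → ℤ} {nu : Setoid β → Setoid β → ℤ}
    (hmu : IsMobius mu) (hnu : IsMobius nu) : mu (Setoid.ker f) ⊤ = nu ⊥ ⊤ := by
  have := hmu.restrict (s := Set.Ici (Setoid.ker f)) |>.eq_comp_orderIso
    (Setoid.iciKerOrderIso hf) hnu ⊥ ⊤
  rwa [OrderIso.map_bot, OrderIso.map_top] at this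

@[simp]
lemma modp_apply {n : ℕ} {A : Set (Fin n)} {x y : Fin n} :
    modp n A x y ↔ x = y ∨ x ∈ A ∧ y ∈ A :=
  Iff.rfl

lemma Setoid.le_bot_iff_forall {α : Type*} {r : Setoid α} : r ≤ ⊥ ↔ ∀ x y, r x y → x = y :=
  Iff.rfl

section PartitionLattice

variable {n : ℕ}

lemma ker_lastCases (i : Fin (n + 1)) :
    Setoid.ker (Fin.lastCases i id : Fin (n + 2) → Fin (n + 1)) =
      modp (n + 2) {i.castSucc, Fin.last _} := by
  ext x y
  induction x using Fin.lastCases <;> induction y using Fin.lastCases <;>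
    simp [Setoid.ker_def, eq_comm, Fin.castSucc_ne_last]
  rintro rfl rfl
  rfl

lemma inf_modp_ne_last_eq_bot_iff {x : Setoid (Fin (n + 2))} :
    x ⊓ modp (n + 2) {y | y ≠ Fin.last _} = ⊥ ↔
      x = ⊥ ∨ ∃ i : Fin (n + 1), modp (n + 2) {i.castSucc, Fin.last _} = x := by
  set t := Fin.last (n + 1)
  have hinf : x ⊓ modp (n + 2) {y | y ≠ t} = ⊥ ↔ ∀ u v, x u v → u ≠ t → v ≠ t → u = v := by
    rw [← le_bot_iff, Setoid.le_bot_iff_forall]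
    simp only [Setoid.inf_iff_and, modp_apply, Set.mem_ofPred_eq]
    grind
  rw [hinf]
  constructor
  · intro H
    refine or_iff_not_imp_left.mpr fun hbot => ?_
    obtain ⟨u, v, huv, hne⟩ : ∃ u v, x u v ∧ u ≠ v := by
      by_contra! h
      exact hbot (le_bot_iff.mp (Setoid.le_bot_iff_forall.mpr h))
    obtain ⟨c, hc, hct⟩ : ∃ c, x c t ∧ c ≠ t := by
      rcases eq_or_ne v t with rfl | hvt
      · exact ⟨u, huv, hne⟩
      rcases eq_or_ne u t with rfl | hut
      · exact ⟨v, x.symm' huv, hvt⟩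
      exact absurd (H u v huv hut hvt) hne
    have hblock : ∀ w, x w t → w = c ∨ w = t := fun w hw => by
      rcases eq_or_ne w t with h | h
      · exact Or.inr h
      · exact Or.inl (H w c (x.trans' hw (x.symm' hc)) h hct)
    obtain ⟨i, rfl⟩ := Fin.exists_castSucc_eq.mpr hct
    refine ⟨i, Setoid.ext fun w z => ?_⟩
    simp only [modp_apply, Set.mem_insert_iff, Set.mem_singleton_iff]
    constructor
    · rintro (rfl | ⟨rfl | rfl, rfl | rfl⟩)
      exacts [x.refl' _, x.refl' _, hc, x.symm' hc, x.refl' _]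
    · intro hwz
      rcases eq_or_ne z t with rfl | hzt
      · exact Or.inr ⟨hblock w hwz, Or.inr rfl⟩
      rcases eq_or_ne w t with rfl | hwt
      · exact Or.inr ⟨Or.inr rfl, hblock z (x.symm' hwz)⟩
      · exact Or.inl (H w z hwz hwt hzt)
  · rintro (rfl | ⟨i, rfl⟩) u v huv hut hvt
    · exact huv
    · simp only [modp_apply, Set.mem_insert_iff, Set.mem_singleton_iff] at huv
      grind

open Nat in
theorem IsMobius.partition_bot_top (n : ℕ) {mu : Setoid (Fin (n + 1)) → Setoid (Fin (n + 1)) → ℤ}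
    (h : IsMobius mu) : mu ⊥ ⊤ = (-1) ^ n * n ! := by
  induction n with
  | zero =>
    rw [show (⊥ : Setoid (Fin 1)) = ⊤ from Setoid.eq_top_iff.mpr fun x y => Subsingleton.elim x y,
      h.1]
    rfl
  | succ n ih =>
    set p : Fin (n + 1) → Setoid (Fin (n + 2)) := fun i => modp (n + 2) {i.castSucc, Fin.last _}
    have hp_rel (i : Fin (n + 1)) : p i i.castSucc (Fin.last _) := Or.inr ⟨Or.inl rfl, Or.inr rfl⟩
    have hp_inj : p.Injective := fun i j hij => by
      have := hp_rel i
      rw [hij] at this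
      simpa [p, Fin.castSucc_ne_last] using this
    have hbot : ⊥ ∉ Set.range p := fun ⟨i, hi⟩ => by
      have := hp_rel i
      rw [hi] at this
      exact Fin.castSucc_ne_last i this
    have hp_top (i : Fin (n + 1)) : mu (p i) ⊤ = (-1) ^ n * n ! := by
      obtain ⟨nu, hnu⟩ := exists_isMobius (Setoid (Fin (n + 1)))
      rw [← ih hnu, show p i = _ from (ker_lastCases i).symm]
      exact h.apply_ker_top (fun j => ⟨j.castSucc, Fin.lastCases_castSucc _⟩) hnu
    have ha : modp (n + 2) {y | y ≠ Fin.last _} ≠ ⊤ := fun ha => by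
      simpa [Fin.castSucc_ne_last] using
        Setoid.eq_top_iff.mp ha (Fin.castSucc 0) (Fin.last _)
    have hW := h.sum_apply_top_of_inf_eq_bot ha
    have hset : {x | x ⊓ modp (n + 2) {y | y ≠ Fin.last _} = ⊥} = insert ⊥ (Set.range p) :=
      Set.ext fun _ => inf_modp_ne_last_eq_bot_iff
    rw [hset, finsum_mem_insert _ hbot (Set.finite_range p),
      finsum_mem_range hp_inj, finsum_eq_sum_of_fintype] at hW
    simp only [hp_top, Finset.sum_const, Finset.card_univ, Fintype.card_fin, nsmul_eq_mul] at hW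
    rw [eq_neg_of_add_eq_zero_left hW, factorial_succ]
    push_cast
    ring

end PartitionLattice

section EmbeddedSubsets

variable {n : ℕ}

lemma isEmbedded_iff {A : Set (Fin n)} {P : Setoid (Fin n)} :
    IsEmbedded n (A, P) ↔ modp n A ≤ P ∧ ∀ i j, P i j → j ∈ A → i ∈ A := by
  unfold IsEmbedded EmbClosure
  simp only [Prod.mk.injEq]
  constructor
  · rintro ⟨hA, hP⟩
    refine ⟨sup_eq_left.mp hP, fun i j hij hj => ?_⟩
    refine hA.subset ⟨j, hj, ?_⟩
    rwa [hP]
  · rintro ⟨hle, hcl⟩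
    rw [sup_eq_left.mpr hle]
    exact ⟨Set.ext fun i => ⟨fun ⟨j, hj, hij⟩ => hcl i j hij hj, fun hi => ⟨i, hi, P.refl' i⟩⟩,
      rfl⟩

def toEmbedded (Q : Setoid (Fin (n + 1))) : XN n :=
  ({i | Q i.castSucc (Fin.last n)}, Q.comap Fin.castSucc)

lemma isEmbedded_toEmbedded (Q : Setoid (Fin (n + 1))) : IsEmbedded n (toEmbedded Q) :=
  isEmbedded_iff.mpr
    ⟨fun _ _ hij => hij.elim (· ▸ Q.refl' _) fun ⟨hi, hj⟩ => Q.trans' hi (Q.symm' hj),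
      fun _ _ hij hj => Q.trans' hij hj⟩

lemma toEmbedded_le_toEmbedded {Q Q' : Setoid (Fin (n + 1))} :
    toEmbedded Q ≤ toEmbedded Q' ↔ Q ≤ Q' := by
  refine ⟨fun ⟨hA, hP⟩ x y hxy => ?_, fun h => ⟨fun _ hi => h hi, fun _ _ hij => h hij⟩⟩
  induction x using Fin.lastCases <;> induction y using Fin.lastCases
  · exact Q'.refl' _
  · exact Q'.symm' (hA (Q.symm' hxy))
  · exact hA hxy
  · exact hP hxy

open Classical in
lemma exists_toEmbedded_eq {A : Set (Fin n)} {P : Setoid (Fin n)} (h : IsEmbedded n (A, P)) :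
    ∃ Q, toEmbedded Q = (A, P) := by
  obtain ⟨hle, hcl⟩ := isEmbedded_iff.mp h
  -- `A` is merged into the block of the extra point, which `none` labels
  let label : Fin (n + 1) → Option (Quotient P) :=
    Fin.lastCases none fun i => if i ∈ A then none else some (Quotient.mk P i)
  refine ⟨Setoid.ker label, Prod.ext (Set.ext fun i => ?_) (Setoid.ext fun i j => ?_)⟩
  · by_cases hi : i ∈ A <;> simp [toEmbedded, Setoid.ker_def, label, hi]
  · show label i.castSucc = label j.castSucc ↔ P i j
    by_cases hi : i ∈ A <;> by_cases hj : j ∈ A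
    · simpa [label, hi, hj] using hle (Or.inr ⟨hi, hj⟩)
    · simpa [label, hi, hj] using fun hij => hj (hcl j i (P.symm' hij) hi)
    · simpa [label, hi, hj] using fun hij => hi (hcl i j hij hj)
    · simp [label, hi, hj, Quotient.eq]

noncomputable def setoidOrderIsoEmb (n : ℕ) : Setoid (Fin (n + 1)) ≃o Emb n :=
  OrderIso.ofSurjective
    (OrderEmbedding.ofMapLEIff (fun Q => ⟨toEmbedded Q, isEmbedded_toEmbedded Q⟩)
      fun _ _ => toEmbedded_le_toEmbedded)
    fun ⟨(_, _), h⟩ => (exists_toEmbedded_eq h).imp fun _ hQ => Subtype.ext hQ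

lemma setoidOrderIsoEmb_bot : setoidOrderIsoEmb n ⊥ = botE n :=
  Subtype.ext <| Prod.ext (Set.eq_empty_of_forall_notMem Fin.castSucc_ne_last)
    (Setoid.ext fun _ _ => Fin.castSucc_inj)

lemma setoidOrderIsoEmb_top : setoidOrderIsoEmb n ⊤ = topE n :=
  Subtype.ext <| Prod.ext (Set.eq_univ_of_forall fun _ => trivial) (Setoid.ext fun _ _ => Iff.rfl)

end EmbeddedSubsets

theorem mobius_bot_top_general (n : ℕ)
    (mu1 : Emb n → Emb n → ℤ) (mu2 : Setoid (Fin (n + 1)) → Setoid (Fin (n + 1)) → ℤ)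
    (h1 : IsMobius mu1) (h2 : IsMobius mu2) :
    mu1 (botE n) (topE n) = mu2 ⊥ ⊤ ∧
    mu1 (botE n) (topE n) = (-1) ^ n * (Nat.factorial n : ℤ) := by
  have key : mu1 (botE n) (topE n) = mu2 ⊥ ⊤ := by
    rw [h2.eq_comp_orderIso (setoidOrderIsoEmb n) h1, setoidOrderIsoEmb_bot, setoidOrderIsoEmb_top]
  exact ⟨key, key.trans (h2.partition_bot_top n)⟩

theorem mobius_bot_top (n : ℕ) (hn : 1 ≤ n)
    (mu1 : Emb n → Emb n → ℤ) (mu2 : Setoid (Fin (n + 1)) → Setoid (Fin (n + 1)) → ℤ)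
    (h1 : IsMobius mu1) (h2 : IsMobius mu2) :
    mu1 (botE n) (topE n) = mu2 ⊥ ⊤ ∧
    mu1 (botE n) (topE n) = (-1) ^ n * (Nat.factorial n : ℤ) :=
  mobius_bot_top_general n mu1 mu2 h1 h2
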